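/- Let α, β, κ ∈ ℝ, let g(t) = sinh(α)·cos(κt+β) + cosh(α), and define φ : ℝ → ℝ by φ(t) = −log(g(t)). Then φ satisfies the second-order differential equation φ″(t) − (1/2)·(φ′(t))² + (1/2)·κ²·e^{2φ(t)} = (1/2)·κ² for all t ∈ ℝ. -/

import Mathlib

/-!
Substituting `g = e^{-φ}` turns the equation `φ'' - φ'²/2 + κ²e^{2φ}/2 = κ²/2` into the
polynomial relation `2 g g'' - g'² = κ² (1 - g²)`, since `φ' = -g'/g` and
`φ'' = (g'² - g g'')/g²`. For `g = sinh α · cos(κt+β) + cosh α` this relation reduces to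
`cosh² α - sinh² α = 1`, and `g` is positive because `|sinh α| < cosh α`.
-/

open Real

lemma sinh_mul_cos_add_cosh_pos (a x : ℝ) : 0 < sinh a * cos x + cosh a := by
  have hlt : sinh a < cosh a := sinh_lt_cosh a
  have hlt' : -sinh a < cosh a := by simpa using sinh_lt_cosh (-a)
  rcases le_total 0 (sinh a) with hs | hs
  · nlinarith [neg_one_le_cos x]
  · nlinarith [cos_le_one x]

theorem neg_log_solves_of_sq_relation {g g' g'' : ℝ → ℝ} (κ : ℝ) (hpos : ∀ t, 0 < g t)
    (hg : ∀ t, HasDerivAt g (g' t) t) (hg' : ∀ t, HasDerivAt g' (g'' t) t)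
    (hrel : ∀ t, 2 * g t * g'' t - g' t ^ 2 = κ ^ 2 * (1 - g t ^ 2)) (t : ℝ) :
    deriv (deriv fun t => -log (g t)) t - 1 / 2 * deriv (fun t => -log (g t)) t ^ 2 +
      1 / 2 * κ ^ 2 * exp (2 * -log (g t)) = 1 / 2 * κ ^ 2 := by
  have hφ' : deriv (fun t => -log (g t)) = fun t => -(g' t / g t) :=
    funext fun t => ((hg t).log (hpos t).ne').neg.deriv
  have hφ'' : deriv (fun t => -(g' t / g t)) t =
      -((g'' t * g t - g' t * g' t) / g t ^ 2) :=
    ((hg' t).div (hg t) (hpos t).ne').neg.deriv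
  have hexp : exp (2 * -log (g t)) = (g t ^ 2)⁻¹ := by
    rw [mul_neg, exp_neg, two_mul, exp_add, exp_log (hpos t), sq]
  rw [hφ', hφ'', hexp]
  have hg0 := (hpos t).ne'
  field_simp
  linear_combination (-1 : ℝ) * hrel t

lemma hasDerivAt_cos_mul_add (κ β t : ℝ) :
    HasDerivAt (fun t => cos (κ * t + β)) (-(κ * sin (κ * t + β))) t := by
  simpa [mul_comm] using (((hasDerivAt_id t).const_mul κ).add_const β).cos

lemma hasDerivAt_sin_mul_add (κ β t : ℝ) :
    HasDerivAt (fun t => sin (κ * t + β)) (κ * cos (κ * t + β)) t := by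
  simpa [mul_comm] using (((hasDerivAt_id t).const_mul κ).add_const β).sin

lemma sinh_mul_cos_add_cosh_sq_relation (α β κ t : ℝ) :
    2 * (sinh α * cos (κ * t + β) + cosh α) * (sinh α * -(κ * (κ * cos (κ * t + β)))) -
        (sinh α * -(κ * sin (κ * t + β))) ^ 2 =
      κ ^ 2 * (1 - (sinh α * cos (κ * t + β) + cosh α) ^ 2) := by
  linear_combination (-(κ ^ 2 * sinh α ^ 2)) * sin_sq_add_cos_sq (κ * t + β) +
    κ ^ 2 * cosh_sq_sub_sinh_sq α

/-- Let `α, β, κ ∈ ℝ`, let `g t = sinh(α)·cos(κt+β) + cosh(α)` and `φ t = −log (g t)`.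
Then `φ″ t − (1/2)·(φ′ t)² + (1/2)·κ²·e^{2φ t} = (1/2)·κ²` for all `t`. -/
theorem stmt10 (α β κ : ℝ)
    (g : ℝ → ℝ) (hg : ∀ t, g t = Real.sinh α * Real.cos (κ * t + β) + Real.cosh α)
    (φ : ℝ → ℝ) (hφ : ∀ t, φ t = -Real.log (g t)) :
    ∀ t : ℝ,
      deriv (deriv φ) t - (1 / 2) * (deriv φ t) ^ 2 +
        (1 / 2) * κ ^ 2 * Real.exp (2 * φ t) = (1 / 2) * κ ^ 2 := by
  obtain rfl : g = fun t => sinh α * cos (κ * t + β) + cosh α := funext hg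
  obtain rfl : φ = fun t => -log (sinh α * cos (κ * t + β) + cosh α) := funext hφ
  exact neg_log_solves_of_sq_relation κ (fun t => sinh_mul_cos_add_cosh_pos α _)
    (fun t => ((hasDerivAt_cos_mul_add κ β t).const_mul (sinh α)).add_const (cosh α))
    (fun t => ((hasDerivAt_sin_mul_add κ β t).const_mul κ).neg.const_mul (sinh α))
    (sinh_mul_cos_add_cosh_sq_relation α β κ)
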